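/- arXiv:2403.17579 — 2 statements merged into one kernel-verified Lean document; each statement's English description precedes it below -/
import Mathlib

section
/- Let n, k ≥ 1 be integers. Every polynomial f in the ring L_{n,k} = ℂ[X_{i,s} : 1 ≤ i ≤ n, 1 ≤ s ≤ k] of polynomials in the entries of an n × k matrix of indeterminates X can be written as a finite sum f = Σ_j Q_j · H_j, where each Q_j ∈ L_{n,k} is invariant under the substitutions X ↦ Xg for all g ∈ O_k(ℝ), and each H_j ∈ L_{n,k} is pluriharmonic. In other words, L_{n,k} = L_{n,k}^{O_k} · 𝔥_{n,k}. -/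
open MvPolynomial Finset

noncomputable section

namespace PluriHarmAux

variable {ι : Type*} [Fintype ι] [DecidableEq ι]

/-- factorial weight -/
def wtN (α : ι →₀ ℕ) : ℕ := ∏ i : ι, Nat.factorial (α i)

lemma wtN_pos (α : ι →₀ ℕ) : 0 < wtN α :=
  Finset.prod_pos fun i _ => Nat.factorial_pos _

lemma wtN_add_single (β : ι →₀ ℕ) (u : ι) :
    wtN (β + Finsupp.single u 1) = (β u + 1) * wtN β := by
  set γ := β + Finsupp.single u 1 with hγ
  unfold wtN
  rw [← Finset.mul_prod_erase _ (fun i => Nat.factorial (γ i)) (Finset.mem_univ u),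
      ← Finset.mul_prod_erase _ (fun i => Nat.factorial (β i)) (Finset.mem_univ u)]
  have h1 : ∀ i ∈ Finset.univ.erase u,
      Nat.factorial (γ i) = Nat.factorial (β i) := by
    intro i hi
    rw [hγ, Finsupp.add_apply, Finsupp.single_apply,
      if_neg (Finset.ne_of_mem_erase hi).symm, add_zero]
  rw [Finset.prod_congr rfl h1]
  have h2 : γ u = β u + 1 := by rw [hγ]; simp
  rw [h2, Nat.factorial_succ, mul_assoc]

/-- The Fischer inner product on polynomials. -/
def finner (f g : MvPolynomial ι ℂ) : ℂ :=
  ∑ α ∈ f.support ∪ g.support,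
    (wtN α : ℂ) * (starRingEnd ℂ) (coeff α f) * coeff α g

lemma finner_eq_sum (f g : MvPolynomial ι ℂ) (s : Finset (ι →₀ ℕ))
    (hf : f.support ⊆ s) (hg : g.support ⊆ s) :
    finner f g = ∑ α ∈ s, (wtN α : ℂ) * (starRingEnd ℂ) (coeff α f) * coeff α g := by
  unfold finner
  refine Finset.sum_subset (Finset.union_subset hf hg) ?_
  intro α _ hα
  rcases Finset.notMem_union.mp hα with ⟨h1, _⟩
  rw [MvPolynomial.notMem_support_iff.mp h1]
  simp

lemma finner_add_left (f f' g : MvPolynomial ι ℂ) :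
    finner (f + f') g = finner f g + finner f' g := by
  classical
  set s := (f + f').support ∪ f.support ∪ f'.support ∪ g.support with hs
  rw [finner_eq_sum (f+f') g s (by intro x hx; simp only [hs, Finset.mem_union]; tauto) (by intro x hx; simp only [hs, Finset.mem_union]; tauto),
      finner_eq_sum f g s (by intro x hx; simp only [hs, Finset.mem_union]; tauto) (by intro x hx; simp only [hs, Finset.mem_union]; tauto),
      finner_eq_sum f' g s (by intro x hx; simp only [hs, Finset.mem_union]; tauto) (by intro x hx; simp only [hs, Finset.mem_union]; tauto),
      ← Finset.sum_add_distrib]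
  refine Finset.sum_congr rfl fun α _ => ?_
  rw [coeff_add, map_add]
  ring

lemma finner_smul_left (f g : MvPolynomial ι ℂ) (r : ℂ) :
    finner (r • f) g = (starRingEnd ℂ) r * finner f g := by
  classical
  set s := (r • f).support ∪ f.support ∪ g.support with hs
  rw [finner_eq_sum (r • f) g s (by intro x hx; simp only [hs, Finset.mem_union]; tauto) (by intro x hx; simp only [hs, Finset.mem_union]; tauto),
      finner_eq_sum f g s (by intro x hx; simp only [hs, Finset.mem_union]; tauto) (by intro x hx; simp only [hs, Finset.mem_union]; tauto),
      Finset.mul_sum]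
  refine Finset.sum_congr rfl fun α _ => ?_
  rw [coeff_smul, smul_eq_mul, map_mul]
  ring

lemma finner_conj_symm (f g : MvPolynomial ι ℂ) :
    (starRingEnd ℂ) (finner g f) = finner f g := by
  unfold finner
  rw [Finset.union_comm, map_sum]
  refine Finset.sum_congr rfl fun α _ => ?_
  simp only [map_mul, map_natCast, Complex.conj_conj]
  ring

lemma finner_self_eq (f : MvPolynomial ι ℂ) :
    finner f f = ((∑ α ∈ f.support, (wtN α : ℝ) * Complex.normSq (coeff α f) : ℝ) : ℂ) := by
  rw [finner_eq_sum f f f.support subset_rfl subset_rfl, Complex.ofReal_sum]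
  refine Finset.sum_congr rfl fun α _ => ?_
  rw [Complex.ofReal_mul, mul_assoc, ← Complex.normSq_eq_conj_mul_self]
  push_cast
  ring

def fischerCore : InnerProductSpace.Core ℂ (MvPolynomial ι ℂ) where
  inner := finner
  conj_inner_symm := finner_conj_symm
  re_inner_nonneg := by
    intro f
    show 0 ≤ RCLike.re (finner f f)
    rw [RCLike.re_to_complex, finner_self_eq, Complex.ofReal_re]
    exact Finset.sum_nonneg fun α _ =>
      mul_nonneg (by positivity) (Complex.normSq_nonneg _)
  add_left := finner_add_left
  smul_left := fun f g r => finner_smul_left f g r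
  definite := by
    intro f hf
    replace hf : finner f f = 0 := hf
    rw [finner_self_eq] at hf
    have h0 : (∑ α ∈ f.support, (wtN α : ℝ) * Complex.normSq (coeff α f) : ℝ) = 0 := by
      exact_mod_cast hf
    have hall := (Finset.sum_eq_zero_iff_of_nonneg (fun α _ =>
      mul_nonneg (by positivity) (Complex.normSq_nonneg _))).mp h0
    ext α
    by_cases hα : α ∈ f.support
    · have := hall α hα
      have hw : (wtN α : ℝ) ≠ 0 := by
        exact_mod_cast (wtN_pos α).ne'
      have : Complex.normSq (coeff α f) = 0 := by
        rcases mul_eq_zero.mp this with h | h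
        · exact absurd h hw
        · exact h
      simpa [Complex.normSq_eq_zero] using this
    · simpa using MvPolynomial.notMem_support_iff.mp hα

noncomputable instance : NormedAddCommGroup (MvPolynomial ι ℂ) :=
  (fischerCore (ι := ι)).toNormedAddCommGroup

noncomputable instance : InnerProductSpace ℂ (MvPolynomial ι ℂ) :=
  InnerProductSpace.ofCore (fischerCore (ι := ι)).toCore

lemma inner_eq_finner (f g : MvPolynomial ι ℂ) :
    (inner ℂ f g : ℂ) = finner f g := rfl

lemma finner_monomial (β γ : ι →₀ ℕ) (b c : ℂ) :
    finner (monomial β b) (monomial γ c) =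
      if β = γ then (wtN β : ℂ) * (starRingEnd ℂ) b * c else 0 := by
  by_cases h : β = γ
  · subst h
    rw [finner_eq_sum _ _ {β} (MvPolynomial.support_monomial_subset)
        (MvPolynomial.support_monomial_subset), Finset.sum_singleton, if_pos rfl]
    simp [MvPolynomial.coeff_monomial]
  · rw [if_neg h]
    rw [finner_eq_sum _ _ {β, γ}
        (MvPolynomial.support_monomial_subset.trans (by simp))
        (MvPolynomial.support_monomial_subset.trans (by simp)),
        Finset.sum_pair h]
    rw [MvPolynomial.coeff_monomial, MvPolynomial.coeff_monomial,
        MvPolynomial.coeff_monomial, MvPolynomial.coeff_monomial]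
    rw [if_neg h, if_neg (Ne.symm h)]
    simp

lemma finner_X_mul_monomial (u : ι) (β γ : ι →₀ ℕ) (b c : ℂ) :
    finner (X u * monomial β b) (monomial γ c)
      = finner (monomial β b) (pderiv u (monomial γ c)) := by
  have hX : (X u : MvPolynomial ι ℂ) * monomial β b = monomial (β + Finsupp.single u 1) b := by
    rw [MvPolynomial.X, MvPolynomial.monomial_mul, one_mul, add_comm]
  rw [hX, MvPolynomial.pderiv_monomial, finner_monomial, finner_monomial]
  by_cases hγ : γ u = 0
  · have h1 : ¬ (β + Finsupp.single u 1 = γ) := by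
      intro h
      have := congrArg (fun δ : ι →₀ ℕ => δ u) h
      simp [hγ] at this
    rw [if_neg h1, hγ]
    split
    · simp
    · rfl
  · set δ := γ - Finsupp.single u 1 with hδdef
    have hδ : δ + Finsupp.single u 1 = γ := by
      ext i
      by_cases hi : i = u
      · subst hi
        simp [hδdef, Nat.sub_add_cancel (Nat.one_le_iff_ne_zero.mpr hγ)]
      · simp [hδdef, Finsupp.single_apply, Ne.symm hi, hi]
    have hcond : (β + Finsupp.single u 1 = γ) ↔ (β = δ) := by
      constructor
      · intro h
        have h2 : β + Finsupp.single u 1 = δ + Finsupp.single u 1 := by rw [hδ]; exact h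
        exact add_right_cancel h2
      · intro h; rw [h, hδ]
    by_cases h : β = δ
    · rw [if_pos (hcond.mpr h), if_pos h, h]
      have hw : wtN (δ + Finsupp.single u 1) = (δ u + 1) * wtN δ := wtN_add_single _ u
      have hcount : δ u + 1 = γ u := by
        have := congrArg (fun ρ : ι →₀ ℕ => ρ u) hδ
        simpa using this
      rw [hw, hcount]
      push_cast
      ring
    · rw [if_neg (fun hh => h (hcond.mp hh)), if_neg h]

lemma inner_X_mul (u : ι) (g h : MvPolynomial ι ℂ) :
    (inner ℂ (X u * g) h : ℂ) = inner ℂ g (pderiv u h) := by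
  induction g using MvPolynomial.induction_on' with
  | add p q hp hq => rw [mul_add, inner_add_left, inner_add_left, hp, hq]
  | monomial β b =>
    induction h using MvPolynomial.induction_on' with
    | add p q hp hq => rw [map_add, inner_add_right, inner_add_right, hp, hq]
    | monomial γ c =>
      rw [inner_eq_finner, inner_eq_finner]
      exact finner_X_mul_monomial u β γ b c

lemma sum_sub_single (α : ι →₀ ℕ) (u : ι) (hu : α u ≠ 0) :
    ((α - Finsupp.single u 1).sum fun _ e => e) = (α.sum fun _ e => e) - 1 := by
  classical
  set δ := α - Finsupp.single u 1 with hδ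
  have h1 : (δ.sum fun _ e => e) = ∑ i : ι, δ i :=
    Finsupp.sum_fintype _ _ (fun _ => rfl)
  have h2 : (α.sum fun _ e => e) = ∑ i : ι, α i :=
    Finsupp.sum_fintype _ _ (fun _ => rfl)
  rw [h1, h2, ← Finset.add_sum_erase _ δ (Finset.mem_univ u),
      ← Finset.add_sum_erase _ (fun i => α i) (Finset.mem_univ u)]
  have h3 : ∀ i ∈ Finset.univ.erase u, δ i = α i := by
    intro i hi
    rw [hδ, Finsupp.tsub_apply, Finsupp.single_apply,
      if_neg (Finset.ne_of_mem_erase hi).symm, Nat.sub_zero]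
  rw [Finset.sum_congr rfl h3]
  have h4 : δ u = α u - 1 := by
    rw [hδ, Finsupp.tsub_apply, Finsupp.single_apply, if_pos rfl]
  rw [h4]
  have he : (Finset.univ.erase u).sum ⇑α = ∑ x ∈ Finset.univ.erase u, α x := rfl
  omega

lemma totalDegree_pderiv_le (u : ι) (f : MvPolynomial ι ℂ) :
    (pderiv u f).totalDegree ≤ f.totalDegree - 1 := by
  conv_lhs => rw [f.as_sum]
  rw [map_sum]
  refine (MvPolynomial.totalDegree_finset_sum _ _).trans (Finset.sup_le ?_)
  intro α hα
  rw [MvPolynomial.pderiv_monomial]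
  by_cases hu : α u = 0
  · rw [hu]
    simp
  · refine (MvPolynomial.totalDegree_monomial_le _ _).trans ?_
    have : ((α - Finsupp.single u 1).sum fun _ e => (id e : ℕ)) = (α.sum fun _ e => e) - 1 :=
      sum_sub_single α u hu
    rw [this]
    exact Nat.sub_le_sub_right (MvPolynomial.le_totalDegree hα) 1

end PluriHarmAux

end

noncomputable section

namespace PluriHarmMain

open PluriHarmAux

variable {n k : ℕ}

abbrev V (n k : ℕ) := MvPolynomial (Fin n × Fin k) ℂ

def rP (n k : ℕ) (i j : Fin n) : V n k := ∑ t : Fin k, X (i, t) * X (j, t)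

def Inv (q : V n k) : Prop :=
  ∀ g : Matrix.orthogonalGroup (Fin k) ℝ,
    aeval (fun p : Fin n × Fin k =>
      ∑ t : Fin k, X (p.1, t) * C (((g : Matrix (Fin k) (Fin k) ℝ) t p.2 : ℂ))) q = q

def Pluri (h : V n k) : Prop :=
  ∀ i i' : Fin n, ∑ s : Fin k, pderiv (i, s) (pderiv (i', s) h) = 0

lemma inv_one : Inv (1 : V n k) := fun _ => map_one _

lemma inv_mul {q q' : V n k} (h : Inv q) (h' : Inv q') : Inv (q * q') := fun g => by
  rw [map_mul, h g, h' g]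

lemma inv_C (c : ℂ) : Inv (C c : V n k) := fun g => by
  rw [aeval_C, MvPolynomial.algebraMap_eq]

lemma inv_rP (i j : Fin n) : Inv (rP n k i j) := by
  intro g
  set G : Matrix (Fin k) (Fin k) ℝ := (g : Matrix (Fin k) (Fin k) ℝ) with hG
  have hg : G * star G = 1 := (Unitary.mem_iff.mp g.prop).2
  have horth : ∀ t t' : Fin k, (∑ s : Fin k, G t s * G t' s) = if t = t' then 1 else 0 := by
    intro t t'
    have h1 : (G * star G) t t' = (1 : Matrix (Fin k) (Fin k) ℝ) t t' := by rw [hg]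
    rw [Matrix.mul_apply, Matrix.one_apply] at h1
    simpa [Matrix.star_apply, star_trivial] using h1
  set φ : Fin n × Fin k → V n k :=
    fun p => ∑ t : Fin k, X (p.1, t) * C ((G t p.2 : ℂ)) with hφ
  show aeval φ (rP n k i j) = rP n k i j
  rw [rP, map_sum]
  have step1 : ∀ s : Fin k, aeval φ ((X (i, s) : V n k) * X (j, s))
      = ∑ t : Fin k, ∑ t' : Fin k,
          X (i, t) * X (j, t') * C ((G t s : ℂ) * (G t' s : ℂ)) := by
    intro s
    rw [map_mul, aeval_X, aeval_X, hφ]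
    rw [Finset.sum_mul_sum]
    refine Finset.sum_congr rfl fun t _ => Finset.sum_congr rfl fun t' _ => ?_
    rw [C_mul]
    ring
  rw [Finset.sum_congr rfl fun s _ => step1 s]
  rw [Finset.sum_comm]
  have step2 : ∀ t : Fin k, ∑ s : Fin k, ∑ t' : Fin k,
      X (i, t) * X (j, t') * C ((G t s : ℂ) * (G t' s : ℂ))
      = X (i, t) * X (j, t) := by
    intro t
    rw [Finset.sum_comm]
    have step3 : ∀ t' : Fin k, ∑ s : Fin k,
        X (i, t) * X (j, t') * C ((G t s : ℂ) * (G t' s : ℂ))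
        = X (i, t) * X (j, t') * C (((if t = t' then (1:ℝ) else 0) : ℝ) : ℂ) := by
      intro t'
      rw [← Finset.mul_sum, ← map_sum]
      congr 2
      rw [← horth t t']
      push_cast
      rfl
    rw [Finset.sum_congr rfl fun t' _ => step3 t']
    rw [Finset.sum_eq_single t]
    · simp
    · intro t' _ hne
      rw [if_neg fun hh => hne hh.symm]
      simp
    · intro habs
      exact absurd (Finset.mem_univ t) habs
  rw [Finset.sum_congr rfl fun t _ => step2 t]

lemma inner_rP_mul (i j : Fin n) (g h : V n k) :
    (inner ℂ (rP n k i j * g) h : ℂ)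
      = inner ℂ g (∑ s : Fin k, pderiv (j, s) (pderiv (i, s) h)) := by
  rw [rP, Finset.sum_mul, sum_inner, inner_sum]
  refine Finset.sum_congr rfl fun s _ => ?_
  rw [mul_assoc, inner_X_mul, inner_X_mul]

lemma totalDegree_rP_le (i j : Fin n) : (rP n k i j).totalDegree ≤ 2 := by
  rw [rP]
  refine (MvPolynomial.totalDegree_finset_sum _ _).trans (Finset.sup_le fun t _ => ?_)
  refine (MvPolynomial.totalDegree_mul _ _).trans ?_
  have h1 : (X (i, t) : V n k).totalDegree = 1 := MvPolynomial.totalDegree_X _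
  have h2 : (X (j, t) : V n k).totalDegree = 1 := MvPolynomial.totalDegree_X _
  omega

def T (n k : ℕ) : Submodule ℂ (V n k) :=
  Submodule.span ℂ {p : V n k | ∃ q h, Inv q ∧ Pluri h ∧ p = q * h}

lemma pluri_mem_T {h : V n k} (hh : Pluri h) : h ∈ T n k :=
  Submodule.subset_span ⟨1, h, inv_one, hh, (one_mul h).symm⟩

lemma inv_mul_mem_T {q x : V n k} (hq : Inv q) (hx : x ∈ T n k) : q * x ∈ T n k := by
  induction hx using Submodule.span_induction with
  | mem p hp =>
    obtain ⟨q', h', hq', hh', rfl⟩ := hp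
    exact Submodule.subset_span ⟨q * q', h', inv_mul hq hq', hh', (mul_assoc q q' h').symm⟩
  | zero => rw [mul_zero]; exact Submodule.zero_mem _
  | add y z hy hz hy' hz' => rw [mul_add]; exact Submodule.add_mem _ hy' hz'
  | smul a y hy hy' => rw [mul_smul_comm]; exact Submodule.smul_mem _ _ hy'

lemma pluri_of_deg_zero {f : V n k} (h0 : f.totalDegree = 0) : Pluri f := by
  have hz : ∀ u : Fin n × Fin k, pderiv u f = 0 := by
    intro u
    conv_lhs => rw [f.as_sum]
    rw [map_sum]
    refine Finset.sum_eq_zero fun α hα => ?_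
    rw [MvPolynomial.pderiv_monomial]
    have hx := ((MvPolynomial.totalDegree_eq_zero_iff _ f).mp h0) α hα u
    rw [hx]
    simp
  intro i i'
  refine Finset.sum_eq_zero fun s _ => ?_
  rw [hz (i', s), map_zero]

set_option synthInstance.maxHeartbeats 1000000 in
set_option maxHeartbeats 1000000 in
lemma mem_T_of_degree_le : ∀ d : ℕ, ∀ f : V n k, f.totalDegree ≤ d → f ∈ T n k := by
  intro d
  induction d using Nat.strong_induction_on with
  | _ d IH =>
    intro f hf
    rcases Nat.eq_zero_or_pos d with rfl | hd
    · exact pluri_mem_T (pluri_of_deg_zero (Nat.le_zero.mp hf))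
    · set e := d - 2 with he
      set S : Set (V n k) :=
        {p | ∃ (i j : Fin n) (g0 : V n k), g0.totalDegree ≤ e ∧ p = rP n k i j * g0} with hS
      set W := Submodule.span ℂ S with hW
      have hWdeg : W ≤ MvPolynomial.restrictTotalDegree (Fin n × Fin k) ℂ (e + 2) := by
        rw [hW, Submodule.span_le]
        rintro p ⟨i, j, g0, hg0, rfl⟩
        rw [SetLike.mem_coe, MvPolynomial.mem_restrictTotalDegree]
        refine (MvPolynomial.totalDegree_mul _ _).trans ?_
        have hr := totalDegree_rP_le (n := n) (k := k) i j
        omega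
      haveI hWfin : FiniteDimensional ℂ W := Submodule.finiteDimensional_of_le hWdeg
      letI : UniformSpace (V n k) := PseudoMetricSpace.toUniformSpace
      haveI : CompleteSpace W := FiniteDimensional.complete ℂ W
      have hfmem : f ∈ W ⊔ Wᗮ := by
        rw [Submodule.sup_orthogonal_of_hasOrthogonalProjection]; trivial
      obtain ⟨w, hw, h, hh, hwh⟩ := Submodule.mem_sup.mp hfmem
      have hwdeg : w.totalDegree ≤ e + 2 :=
        (MvPolynomial.mem_restrictTotalDegree _ _ _).mp (hWdeg hw)
      have hfdeg : f.totalDegree ≤ e + 2 := hf.trans (by omega)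
      have hhdeg : h.totalDegree ≤ e + 2 := by
        have hsub : h = f - w := by rw [← hwh]; ring
        rw [hsub]
        exact (MvPolynomial.totalDegree_sub _ _).trans (max_le hfdeg hwdeg)
      have hpluri : Pluri h := by
        intro i i'
        set u := ∑ s : Fin k, pderiv (i, s) (pderiv (i', s) h) with hu
        have hudeg : u.totalDegree ≤ e := by
          rw [hu]
          refine (MvPolynomial.totalDegree_finset_sum _ _).trans
            (Finset.sup_le fun s _ => ?_)
          have h1 := totalDegree_pderiv_le (i', s) h
          have h2 := totalDegree_pderiv_le (i, s) (pderiv (i', s) h)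
          omega
        have hmem : rP n k i' i * u ∈ W := by
          rw [hW]
          exact Submodule.subset_span ⟨i', i, u, hudeg, rfl⟩
        have hz : (inner ℂ (rP n k i' i * u) h : ℂ) = 0 :=
          (Submodule.mem_orthogonal _ _).mp hh _ hmem
        rw [inner_rP_mul] at hz
        rw [← hu] at hz
        exact inner_self_eq_zero.mp hz
      have hST : S ⊆ (T n k : Set (V n k)) := by
        rintro p ⟨i, j, g0, hg0, rfl⟩
        exact inv_mul_mem_T (inv_rP i j) (IH e (by omega) g0 hg0)
      have hwT : w ∈ T n k := by
        have hWT : W ≤ T n k := by rw [hW]; exact Submodule.span_le.mpr hST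
        exact hWT hw
      rw [← hwh]
      exact Submodule.add_mem _ hwT (pluri_mem_T hpluri)

end PluriHarmMain

end

/-- Every polynomial `f ∈ L_{n,k}` can be written as a finite sum
`f = Σ_j Q_j · H_j` where each `Q_j` is invariant under all substitutions `X ↦ Xg`
with `g ∈ O_k(ℝ)`, and each `H_j` is pluriharmonic:
`L_{n,k} = L_{n,k}^{O_k} · 𝔥_{n,k}`. -/
theorem exists_invariant_mul_pluriharmonic_decomposition
    (n k : ℕ) (hn : 1 ≤ n) (hk : 1 ≤ k)
    (f : MvPolynomial (Fin n × Fin k) ℂ) :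
    ∃ (m : ℕ) (Q H : Fin m → MvPolynomial (Fin n × Fin k) ℂ),
      (∀ j : Fin m, ∀ g : Matrix.orthogonalGroup (Fin k) ℝ,
          aeval (fun p : Fin n × Fin k =>
            ∑ t : Fin k,
              X (p.1, t) * C (((g : Matrix (Fin k) (Fin k) ℝ) t p.2 : ℂ))) (Q j) = Q j) ∧
      (∀ j : Fin m, ∀ i i' : Fin n,
          ∑ s : Fin k, pderiv (i, s) (pderiv (i', s) (H j)) = 0) ∧
      f = ∑ j : Fin m, Q j * H j := by
  have hfT : f ∈ PluriHarmMain.T n k :=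
    PluriHarmMain.mem_T_of_degree_le f.totalDegree f le_rfl
  rw [PluriHarmMain.T] at hfT
  obtain ⟨m, c, gs, hsum⟩ := Submodule.mem_span_set'.mp hfT
  choose q h hq hh hqh using fun j => (gs j).2
  refine ⟨m, fun j => C (c j) * q j, fun j => h j, ?_, ?_, ?_⟩
  · intro j g
    exact PluriHarmMain.inv_mul (PluriHarmMain.inv_C (c j)) (hq j) g
  · intro j i i'
    exact hh j i i'
  · rw [← hsum]
    refine Finset.sum_congr rfl fun j _ => ?_
    rw [hqh j, MvPolynomial.smul_eq_C_mul, mul_assoc]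
end

section
/- Let n, k ≥ 1 be integers, let f ∈ L_{n,k} = ℂ[X_{i,s} : 1 ≤ i ≤ n, 1 ≤ s ≤ k] be a pluriharmonic polynomial, let a ∈ M_n(ℂ) be an arbitrary complex n × n matrix, and let g ∈ O_k(ℝ) be a real orthogonal matrix. Then the polynomial X ↦ f(a X g), obtained from f by substituting the (i,s)-entry of the matrix product a·X·g for X_{i,s}, is again pluriharmonic. -/
open MvPolynomial

lemma pderiv_aeval_chain {σ τ : Type*} [Fintype σ] [DecidableEq σ] [DecidableEq τ]
    (φ : σ → MvPolynomial τ ℂ) (j : τ) (f : MvPolynomial σ ℂ) :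
    pderiv j (aeval φ f) = ∑ p : σ, aeval φ (pderiv p f) * pderiv j (φ p) := by
  induction f using MvPolynomial.induction_on with
  | C a => simp
  | add p q hp hq =>
      simp only [map_add, hp, hq, add_mul, Finset.sum_add_distrib]
  | mul_X p s hp =>
      have key : ∀ x : σ, pderiv x (p * X s) = pderiv x p * X s + if x = s then p else 0 := by
        intro x
        rw [pderiv_mul, pderiv_X, Pi.single_apply]
        split <;> simp_all [eq_comm]
      have step : ∀ x : σ, aeval φ (pderiv x (p * X s)) * pderiv j (φ x)
          = aeval φ (pderiv x p) * pderiv j (φ x) * φ s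
            + (if x = s then (aeval φ p) * pderiv j (φ x) else 0) := by
        intro x
        rw [key x]
        split <;> simp <;> ring
      rw [map_mul, aeval_X, pderiv_mul, hp, Finset.sum_mul,
        Finset.sum_congr rfl fun x _ => step x, Finset.sum_add_distrib,
        Finset.sum_ite_eq' Finset.univ s]
      simp

/-- If `f ∈ L_{n,k}` is pluriharmonic, `a ∈ M_n(ℂ)` arbitrary and
`g ∈ O_k(ℝ)` orthogonal, then the polynomial `X ↦ f(aXg)`, obtained by substituting the
`(i,s)`-entry `Σ_u Σ_t a_{i,u} X_{u,t} g_{t,s}` of `a·X·g` for `X_{i,s}`, is again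
pluriharmonic. -/
theorem pluriharmonic_of_left_right_substitution
    (n k : ℕ) (hn : 1 ≤ n) (hk : 1 ≤ k)
    (f : MvPolynomial (Fin n × Fin k) ℂ)
    (hf : ∀ i j : Fin n, ∑ s : Fin k, pderiv (i, s) (pderiv (j, s) f) = 0)
    (a : Matrix (Fin n) (Fin n) ℂ) (g : Matrix.orthogonalGroup (Fin k) ℝ) :
    ∀ i j : Fin n,
      ∑ s : Fin k,
        pderiv (i, s) (pderiv (j, s)
          (aeval (fun p : Fin n × Fin k =>
            ∑ u : Fin n, ∑ t : Fin k,
              C (a p.1 u * (((g : Matrix (Fin k) (Fin k) ℝ) t p.2 : ℂ))) * X (u, t)) f)) = 0 := by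
  intro i j
  set G : Matrix (Fin k) (Fin k) ℝ := (g : Matrix (Fin k) (Fin k) ℝ) with hG
  set φ : Fin n × Fin k → MvPolynomial (Fin n × Fin k) ℂ := fun p =>
    ∑ u : Fin n, ∑ t : Fin k, C (a p.1 u * ((G t p.2 : ℝ) : ℂ)) * X (u, t) with hφdef
  have hφ : ∀ (p : Fin n × Fin k) (v : Fin n) (w : Fin k),
      pderiv (v, w) (φ p) = C (a p.1 v * ((G w p.2 : ℝ) : ℂ)) := by
    intro p v w
    simp only [hφdef, map_sum, pderiv_C_mul, pderiv_X, Pi.single_apply, Prod.mk.injEq,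
      mul_ite, mul_one, mul_zero]
    rw [Finset.sum_comm]
    simp [ite_and, Finset.sum_ite_eq', C_mul]
  have horth : ∀ t w : Fin k, (∑ s : Fin k, G s t * G s w) = if t = w then 1 else 0 := by
    intro t w
    have h1 : G.transpose * G = 1 := by
      have := g.2.1
      simpa [Matrix.star_eq_conjTranspose, Matrix.conjTranspose_eq_transpose_of_trivial] using this
    have := congrArg (fun M => M t w) h1
    simpa [Matrix.mul_apply, Matrix.transpose_apply, Matrix.one_apply] using this
  have main : ∀ s : Fin k, pderiv (i, s) (pderiv (j, s) (aeval φ f)) =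
      ∑ q : Fin n × Fin k, ∑ p : Fin n × Fin k,
        aeval φ (pderiv p (pderiv q f)) * (C (a p.1 i) * C (a q.1 j)) *
          C (((G s p.2 : ℝ) : ℂ) * ((G s q.2 : ℝ) : ℂ)) := by
    intro s
    rw [pderiv_aeval_chain φ (j, s) f, map_sum]
    refine Finset.sum_congr rfl fun q _ => ?_
    rw [hφ q j s, pderiv_mul, pderiv_C, mul_zero, add_zero,
      pderiv_aeval_chain φ (i, s) (pderiv q f), Finset.sum_mul]
    refine Finset.sum_congr rfl fun p _ => ?_
    rw [hφ p i s]
    simp only [mul_assoc, ← C_mul]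
    congr 2
    ring
  calc ∑ s : Fin k, pderiv (i, s) (pderiv (j, s) (aeval φ f))
      = ∑ q : Fin n × Fin k, ∑ p : Fin n × Fin k,
          aeval φ (pderiv p (pderiv q f)) * (C (a p.1 i) * C (a q.1 j)) *
            C ((↑(∑ s : Fin k, G s p.2 * G s q.2) : ℂ)) := by
        rw [Finset.sum_congr rfl fun s _ => main s, Finset.sum_comm]
        refine Finset.sum_congr rfl fun q _ => ?_
        rw [Finset.sum_comm]
        refine Finset.sum_congr rfl fun p _ => ?_
        rw [← Finset.mul_sum]
        congr 1
        push_cast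
        rw [← map_sum]
    _ = ∑ q : Fin n × Fin k, ∑ p : Fin n × Fin k,
          (if p.2 = q.2 then aeval φ (pderiv p (pderiv q f)) * (C (a p.1 i) * C (a q.1 j))
           else 0) := by
        refine Finset.sum_congr rfl fun q _ => Finset.sum_congr rfl fun p _ => ?_
        rw [horth p.2 q.2]
        split <;> simp
    _ = ∑ v : Fin n, ∑ w : Fin k, ∑ u : Fin n,
          (C (a u i) * C (a v j)) * aeval φ (pderiv (u, w) (pderiv (v, w) f)) := by
        rw [Fintype.sum_prod_type]
        refine Finset.sum_congr rfl fun v _ => Finset.sum_congr rfl fun w _ => ?_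
        rw [Fintype.sum_prod_type]
        refine Finset.sum_congr rfl fun u _ => ?_
        rw [Finset.sum_ite_eq' Finset.univ w]
        simp [mul_comm]
    _ = ∑ v : Fin n, ∑ u : Fin n,
          (C (a u i) * C (a v j)) *
            aeval φ (∑ w : Fin k, pderiv (u, w) (pderiv (v, w) f)) := by
        refine Finset.sum_congr rfl fun v _ => ?_
        rw [Finset.sum_comm]
        refine Finset.sum_congr rfl fun u _ => ?_
        rw [map_sum, Finset.mul_sum]
    _ = 0 := by
        refine Finset.sum_eq_zero fun v _ => Finset.sum_eq_zero fun u _ => ?_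
        rw [hf u v]
        simp
end
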